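/- Let β ∈ (0,1) and suppose L(w,r) is convex in w for each fixed r, L(w,·) is measurable and μ-integrable for every w, and Φ(w,·) is continuous for every w. Then w ↦ φ_β(w) = CVaR_β(w) is a convex function on ℝⁿ. -/

import Mathlib

open MeasureTheory Set

/-!
The Rockafellar–Uryasev function `F_β(w, α) = α + (1 - β)⁻¹ 𝔼[(L(w, r) - α)⁺]` is jointly
convex in `(w, α)`, since `(L(w, r) - α)⁺` is, and integration preserves convexity. Minimising a
jointly convex function over one variable gives a convex function provided the infimum is finite,
and here `F_β(w, ·) ≥ 𝔼[L(w, r)]` because `(1 - β)⁻¹ ≥ 1`.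
-/

theorem convexOn_ciInf_of_convexOn_prod {E F : Type*} [AddCommGroup E] [Module ℝ E]
    [AddCommGroup F] [Module ℝ F] {f : E → F → ℝ}
    (hf : ConvexOn ℝ univ (fun p : E × F => f p.1 p.2))
    (hbdd : ∀ x, BddBelow (range (f x))) :
    ConvexOn ℝ univ (fun x => ⨅ y, f x y) := by
  refine ⟨convex_univ, fun x₁ _ x₂ _ a b ha hb hab => ?_⟩
  simp only [smul_eq_mul, Real.mul_iInf_of_nonneg ha, Real.mul_iInf_of_nonneg hb]
  refine le_ciInf_add_ciInf fun y₁ y₂ => ?_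
  calc ⨅ y, f (a • x₁ + b • x₂) y ≤ f (a • x₁ + b • x₂) (a • y₁ + b • y₂) :=
        ciInf_le (hbdd _) _
    _ ≤ a * f x₁ y₁ + b * f x₂ y₂ :=
        hf.2 (mem_univ (x₁, y₁)) (mem_univ (x₂, y₂)) ha hb hab

section CVaR

variable {Ω E : Type*} [MeasurableSpace Ω]

noncomputable def cvarObjective (μ : Measure Ω) (L : E → Ω → ℝ) (β : ℝ) (w : E) (α : ℝ) : ℝ :=
  α + (1 - β)⁻¹ * ∫ r, max (L w r - α) 0 ∂μ

theorem convexOn_cvarObjective [AddCommGroup E] [Module ℝ E] (μ : Measure Ω) [IsFiniteMeasure μ]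
    {L : E → Ω → ℝ} {β : ℝ} (hβ : β ≤ 1)
    (hconv : ∀ᵐ r ∂μ, ConvexOn ℝ univ (fun w => L w r)) (hint : ∀ w, Integrable (L w) μ) :
    ConvexOn ℝ univ (fun p : E × ℝ => cvarObjective μ L β p.1 p.2) := by
  have hexcess : ∀ᵐ r ∂μ, ConvexOn ℝ univ (fun p : E × ℝ => max (L p.1 r - p.2) 0) := by
    filter_upwards [hconv] with r hr
    exact ((hr.comp_linearMap (LinearMap.fst ℝ E ℝ)).sub
      ((LinearMap.snd ℝ E ℝ).concaveOn convex_univ)).sup (convexOn_const 0 convex_univ)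
  have hmean := integral_convexOn_of_integrand_ae convex_univ hexcess
    fun p _ => ((hint p.1).sub (integrable_const p.2)).pos_part
  exact ((LinearMap.snd ℝ E ℝ).convexOn convex_univ).add
    (hmean.smul (inv_nonneg.2 (sub_nonneg.2 hβ)))

theorem integral_le_cvarObjective {μ : Measure Ω} [IsProbabilityMeasure μ] {L : E → Ω → ℝ}
    {β : ℝ} (hβ : β ∈ Ico 0 1) {w : E} (hint : Integrable (L w) μ) (α : ℝ) :
    ∫ r, L w r ∂μ ≤ cvarObjective μ L β w α := by
  have hexcess : ∫ r, L w r ∂μ - α ≤ ∫ r, max (L w r - α) 0 ∂μ :=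
    calc ∫ r, L w r ∂μ - α = ∫ r, (L w r - α) ∂μ := by
          rw [integral_sub hint (integrable_const α), integral_const, probReal_univ, one_smul]
      _ ≤ ∫ r, max (L w r - α) 0 ∂μ :=
          integral_mono (hint.sub (integrable_const α)) (hint.sub (integrable_const α)).pos_part
            fun r => le_max_left _ _
  have hc : 1 ≤ (1 - β)⁻¹ := one_le_inv₀ (by linarith [hβ.2]) |>.2 (by linarith [hβ.1])
  have hscale : ∫ r, max (L w r - α) 0 ∂μ ≤ (1 - β)⁻¹ * ∫ r, max (L w r - α) 0 ∂μ :=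
    le_mul_of_one_le_left (integral_nonneg fun r => le_max_right _ _) hc
  unfold cvarObjective
  linarith

end CVaR

theorem stmt_8_general {n : ℕ} (μ : Measure (Fin n → ℝ)) [IsProbabilityMeasure μ]
    (L : (Fin n → ℝ) → (Fin n → ℝ) → ℝ) (β : ℝ)
    (hβ : β ∈ Set.Ioo (0 : ℝ) 1)
    (hconv : ∀ r : Fin n → ℝ, ConvexOn ℝ Set.univ (fun w : Fin n → ℝ => L w r))
    (hint : ∀ w : Fin n → ℝ, Integrable (L w) μ) :
    ConvexOn ℝ (Set.univ : Set (Fin n → ℝ))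
      (fun w : Fin n → ℝ =>
        ⨅ α : ℝ, (α + (1 - β)⁻¹ * ∫ r, max (L w r - α) 0 ∂μ)) :=
  convexOn_ciInf_of_convexOn_prod
    (convexOn_cvarObjective μ hβ.2.le (.of_forall hconv) hint)
    fun w => ⟨∫ r, L w r ∂μ, forall_mem_range.2
      (integral_le_cvarObjective (Ioo_subset_Ico_self hβ) (hint w))⟩

/-- For `β ∈ (0,1)`, if `L (·, r)` is convex in `w` for each fixed `r`, `L w` is
measurable and integrable for every `w`, and `Φ(w,·)` is continuous for every `w`, then
`w ↦ φ_β(w) = CVaR_β(w) = min_α F_β(w,α)` is convex on `ℝⁿ`. -/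
theorem stmt_8 {n : ℕ} (μ : Measure (Fin n → ℝ)) [IsProbabilityMeasure μ]
    (L : (Fin n → ℝ) → (Fin n → ℝ) → ℝ) (β : ℝ)
    (hβ : β ∈ Set.Ioo (0 : ℝ) 1)
    (hconv : ∀ r : Fin n → ℝ, ConvexOn ℝ Set.univ (fun w : Fin n → ℝ => L w r))
    (hmeas : ∀ w : Fin n → ℝ, Measurable (L w))
    (hint : ∀ w : Fin n → ℝ, Integrable (L w) μ)
    (hcont : ∀ w : Fin n → ℝ,
      Continuous (fun α : ℝ => (μ {r | L w r ≤ α}).toReal)) :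
    ConvexOn ℝ (Set.univ : Set (Fin n → ℝ))
      (fun w : Fin n → ℝ =>
        ⨅ α : ℝ, (α + (1 - β)⁻¹ * ∫ r, max (L w r - α) 0 ∂μ)) :=
  stmt_8_general μ L β hβ hconv hint
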